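/- Let Ω, Ω_ν > 0, κ_ν > 0, g ≠ 0, M ≥ 1, and let f_{μ,k} = ±1 satisfy ∑_k f_{μ,k} f_{ν,k} = 2^{M−1} δ_{μν}. Suppose for fixed ν and some |z| ∈ (0,1] we set y_k = 0, z_k = f_{ν,k}|z|, x_k = −√(1−|z|²) for all k, α_μ = 2^{M−1} g |z| δ_{μν} (−Ω_μ − iκ_μ/2)/(Ω_μ² + (κ_μ/2)²). Then (x_k, y_k, z_k, α_μ) is a stationary point of the mean-field equations ẋ_k = −2g∑_μ f_{μ,k}(α_μ*+α_μ) y_k, ẏ_k = −2Ω z_k + 2g∑_μ f_{μ,k}(α_μ*+α_μ) x_k, ż_k = 2Ω y_k, α̇_μ = −(iΩ_μ + κ_μ/2)α_μ − ig ∑_k f_{μ,k} z_k, if and only if |z|² = 1 − (1/(4g₀⁴))(Ω/Ω_ν)²(Ω_ν² + (κ_ν/2)²)², where g₀ = g√(2^{M−1}). -/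

import Mathlib

/-!
With `a = 2^(M-1)` and `D = Ω_ν² + (κ_ν/2)²`, the cavity equation is solved exactly by the
Lorentzian response `α_ν = a g r (-Ω_ν - iκ_ν/2) / D`, because orthogonality of the patterns
turns `∑ₖ f_{μ,k} z_k` into `a r δ_{μν}`; the other modes stay empty. The `x` and `z` equations
hold trivially since `y = 0`. The `y` equation then reads `r (Ω - G √(1 - r²)) = 0` with effective
coupling `G = 2 a g² Ω_ν / D > 0`, i.e. `√(1 - r²) = Ω / G`, and squaring gives the
self-consistency relation.
-/

open Complex

lemma lorentzian_denom_ne_zero {p : ℝ} (hp : p ≠ 0) (q : ℝ) :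
    (p : ℂ) ^ 2 + ((q : ℂ) / 2) ^ 2 ≠ 0 := by
  have : (0 : ℝ) < p ^ 2 + (q / 2) ^ 2 := by positivity
  exact_mod_cast this.ne'

lemma neg_damping_mul_lorentzian (A p q : ℂ) (h : p ^ 2 + (q / 2) ^ 2 ≠ 0) :
    -(I * p + q / 2) * (A * (-p - I * q / 2) / (p ^ 2 + (q / 2) ^ 2)) = I * A := by
  have key : -(I * p + q / 2) * (-p - I * q / 2) = I * (p ^ 2 + (q / 2) ^ 2) := by
    linear_combination p * q / 2 * I_sq
  calc _ = A * (-(I * p + q / 2) * (-p - I * q / 2)) / (p ^ 2 + (q / 2) ^ 2) := by ring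
    _ = I * A := by rw [key, mul_div_assoc, mul_div_cancel_right₀ _ h, mul_comm]

lemma re_lorentzian (A p q : ℝ) :
    ((A : ℂ) * (-(p : ℂ) - I * q / 2) / ((p : ℂ) ^ 2 + ((q : ℂ) / 2) ^ 2)).re
      = -(A * p) / (p ^ 2 + (q / 2) ^ 2) := by
  have hden : (p : ℂ) ^ 2 + ((q : ℂ) / 2) ^ 2 = ((p ^ 2 + (q / 2) ^ 2 : ℝ) : ℂ) := by
    push_cast; ring
  rw [hden, div_ofReal_re]
  simp

lemma precession_eq_zero_iff {Ω g F r β s : ℝ} (hF : F ≠ 0) :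
    -2 * Ω * (F * r) + 2 * g * (F * β) * -s = 0 ↔ Ω * r + g * β * s = 0 := by
  rw [show -2 * Ω * (F * r) + 2 * g * (F * β) * -s = -2 * F * (Ω * r + g * β * s) by ring]
  simp [hF]

lemma self_consistency_iff {Ω g a p D r : ℝ} (hΩ : 0 < Ω) (hg : g ≠ 0) (ha : 0 < a)
    (hp : 0 < p) (hD : 0 < D) (hr : r ≠ 0) :
    Ω * r + g * (2 * (-(a * g * r * p) / D)) * √(1 - r ^ 2) = 0 ↔
      r ^ 2 = 1 - 1 / (4 * (g * √a) ^ 4) * (Ω / p) ^ 2 * D ^ 2 := by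
  set G := 2 * a * g ^ 2 * p / D with hG
  have hG0 : 0 < G := by positivity
  have hfactor : Ω * r + g * (2 * (-(a * g * r * p) / D)) * √(1 - r ^ 2)
      = r * (Ω - G * √(1 - r ^ 2)) := by
    rw [hG]; ring
  have hconst : 1 / (4 * (g * √a) ^ 4) * (Ω / p) ^ 2 * D ^ 2 = (Ω / G) ^ 2 := by
    rw [mul_pow, show √a ^ 4 = (√a ^ 2) ^ 2 by ring, Real.sq_sqrt ha.le, hG]
    field_simp
    ring
  calc Ω * r + g * (2 * (-(a * g * r * p) / D)) * √(1 - r ^ 2) = 0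
      ↔ √(1 - r ^ 2) = Ω / G := by
        rw [hfactor, mul_eq_zero, sub_eq_zero, eq_div_iff hG0.ne']
        simp [hr, eq_comm, mul_comm]
    _ ↔ Ω / G * (Ω / G) = 1 - r ^ 2 := Real.sqrt_eq_iff_mul_self_eq_of_pos (by positivity)
    _ ↔ r ^ 2 = 1 - 1 / (4 * (g * √a) ^ 4) * (Ω / p) ^ 2 * D ^ 2 := by
        rw [hconst]
        constructor <;> intro h <;> linarith

theorem stmt_13_general (M : ℕ) (Ω g r : ℝ) (hΩ : 0 < Ω) (hg : g ≠ 0)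
    (Ωb κb : Fin M → ℝ) (hΩb : ∀ μ, 0 < Ωb μ)
    (f : Fin M → Fin (2 ^ (M - 1)) → ℝ)
    (hfpm : ∀ μ k, f μ k = 1 ∨ f μ k = -1)
    (horth : ∀ μ ν' : Fin M,
      ∑ k, f μ k * f ν' k = if μ = ν' then (2:ℝ) ^ (M - 1) else 0)
    (ν : Fin M) (hr0 : 0 < r)
    (x y z : Fin (2 ^ (M - 1)) → ℝ) (α : Fin M → ℂ)
    (hy : ∀ k, y k = 0)
    (hz : ∀ k, z k = f ν k * r)
    (hx : ∀ k, x k = -Real.sqrt (1 - r ^ 2))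
    (hα : ∀ μ, α μ = (2:ℂ) ^ (M - 1) * (g:ℂ) * (r:ℂ) * (if μ = ν then 1 else 0) *
        (-(Ωb μ : ℂ) - Complex.I * (κb μ : ℂ) / 2) /
        ((Ωb μ : ℂ) ^ 2 + ((κb μ : ℂ) / 2) ^ 2)) :
    ((∀ k, -2 * g * (∑ μ, f μ k * (α μ + (starRingEnd ℂ) (α μ)).re) * y k = 0) ∧
     (∀ k, -2 * Ω * z k + 2 * g * (∑ μ, f μ k * (α μ + (starRingEnd ℂ) (α μ)).re) * x k = 0) ∧
     (∀ k, 2 * Ω * y k = 0) ∧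
     (∀ μ, -(Complex.I * (Ωb μ : ℂ) + (κb μ : ℂ) / 2) * α μ -
        Complex.I * (g:ℂ) * ((∑ k, f μ k * z k : ℝ) : ℂ) = 0))
    ↔ r ^ 2 = 1 - (1 / (4 * (g * Real.sqrt ((2:ℝ) ^ (M - 1))) ^ 4)) *
        (Ω / Ωb ν) ^ 2 * ((Ωb ν) ^ 2 + (κb ν / 2) ^ 2) ^ 2 := by
  set a : ℝ := 2 ^ (M - 1)
  set D : ℝ := Ωb ν ^ 2 + (κb ν / 2) ^ 2
  have hoverlap : ∀ μ, ∑ k, f μ k * z k = (if μ = ν then a else 0) * r := fun μ => by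
    simp only [hz, ← mul_assoc, ← Finset.sum_mul, horth]
  have hmode : ∀ μ, -(I * (Ωb μ : ℂ) + (κb μ : ℂ) / 2) * α μ
      - I * g * ((∑ k, f μ k * z k : ℝ) : ℂ) = 0 := fun μ => by
    rw [hα, neg_damping_mul_lorentzian _ _ _ (lorentzian_denom_ne_zero (hΩb μ).ne' _), hoverlap]
    split_ifs <;> push_cast [a] <;> ring
  have hαν : α ν = ((a * g * r : ℝ) : ℂ) * (-(Ωb ν : ℂ) - I * κb ν / 2)
      / ((Ωb ν : ℂ) ^ 2 + ((κb ν : ℂ) / 2) ^ 2) := by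
    rw [hα]; push_cast [a]; simp
  have hfield : ∀ k, ∑ μ, f μ k * (α μ + (starRingEnd ℂ) (α μ)).re
      = f ν k * (2 * (-(a * g * r * Ωb ν) / D)) := fun k => by
    rw [Fintype.sum_eq_single ν fun μ hμ => by simp [hα, hμ], add_conj, ofReal_re, hαν,
      re_lorentzian]
  have hspin : ∀ k,
      -2 * Ω * z k + 2 * g * (∑ μ, f μ k * (α μ + (starRingEnd ℂ) (α μ)).re) * x k = 0 ↔
        Ω * r + g * (2 * (-(a * g * r * Ωb ν) / D)) * √(1 - r ^ 2) = 0 := fun k => by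
    rw [hfield, hz, hx]
    exact precession_eq_zero_iff (by rcases hfpm ν k with h | h <;> norm_num [h])
  rw [← self_consistency_iff hΩ hg (by positivity) (hΩb ν) (by positivity [hΩb ν]) hr0.ne']
  simp only [hy, mul_zero, forall_const, true_and, hmode, implies_true, and_true, hspin]

/-- The pattern-aligned ansatz is a stationary point of the mean-field equations
iff the overlap satisfies the self-consistency relation. -/
theorem stmt_13 (M : ℕ) (hM : 1 ≤ M) (Ω g r : ℝ) (hΩ : 0 < Ω) (hg : g ≠ 0)
    (Ωb κb : Fin M → ℝ) (hΩb : ∀ μ, 0 < Ωb μ) (hκb : ∀ μ, 0 < κb μ)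
    (f : Fin M → Fin (2 ^ (M - 1)) → ℝ)
    (hfpm : ∀ μ k, f μ k = 1 ∨ f μ k = -1)
    (horth : ∀ μ ν' : Fin M,
      ∑ k, f μ k * f ν' k = if μ = ν' then (2:ℝ) ^ (M - 1) else 0)
    (ν : Fin M) (hr0 : 0 < r) (hr1 : r ≤ 1)
    (x y z : Fin (2 ^ (M - 1)) → ℝ) (α : Fin M → ℂ)
    (hy : ∀ k, y k = 0)
    (hz : ∀ k, z k = f ν k * r)
    (hx : ∀ k, x k = -Real.sqrt (1 - r ^ 2))
    (hα : ∀ μ, α μ = (2:ℂ) ^ (M - 1) * (g:ℂ) * (r:ℂ) * (if μ = ν then 1 else 0) *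
        (-(Ωb μ : ℂ) - Complex.I * (κb μ : ℂ) / 2) /
        ((Ωb μ : ℂ) ^ 2 + ((κb μ : ℂ) / 2) ^ 2)) :
    ((∀ k, -2 * g * (∑ μ, f μ k * (α μ + (starRingEnd ℂ) (α μ)).re) * y k = 0) ∧
     (∀ k, -2 * Ω * z k + 2 * g * (∑ μ, f μ k * (α μ + (starRingEnd ℂ) (α μ)).re) * x k = 0) ∧
     (∀ k, 2 * Ω * y k = 0) ∧
     (∀ μ, -(Complex.I * (Ωb μ : ℂ) + (κb μ : ℂ) / 2) * α μ -
        Complex.I * (g:ℂ) * ((∑ k, f μ k * z k : ℝ) : ℂ) = 0))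
    ↔ r ^ 2 = 1 - (1 / (4 * (g * Real.sqrt ((2:ℝ) ^ (M - 1))) ^ 4)) *
        (Ω / Ωb ν) ^ 2 * ((Ωb ν) ^ 2 + (κb ν / 2) ^ 2) ^ 2 :=
  stmt_13_general M Ω g r hΩ hg Ωb κb hΩb f hfpm horth ν hr0 x y z α hy hz hx hα
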